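/- Let g ≥ 2 and let a be a positive integer or half-integer with 2a ≥ g, and set k := 2a. Define C(1) := (g−1)·∏_{i=1}^{g−1}(2a−i), C(m) := (−1)^{m−1}(m−1)!(2a)^{m−1}·∏_{i=m}^{g−1}(2a−i) for 2 ≤ m ≤ g, and coefficients c(n) for n ∈ ℕ^g with Σn_h = g by: c(1,…,1) := C(1); c(n) := 0 if at least two entries of n exceed 1; c(n) := C(m) if exactly one entry equals m > 1 and all other entries are 0 or 1. Then the polynomial Q_{g,a} := (1/C(1))·Σ_n c(n)·R(n) ∈ ℂ[R₁,…,R_g] is pluriharmonic with respect to g×k matrix blocks X₁,…,X_g; that is, Δ_{ij}(Q̃_{g,a}) = 0 for all 1 ≤ i, j ≤ g. -/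

import Mathlib

open scoped BigOperators Matrix

noncomputable section

/-- Variable index for the polynomial ring `ℂ[R₁,…,R_g]`: the variable `r_{h;ij} = r_{h;ji}`
corresponds to the pair `(h, {i,j})`. -/
abbrev RVars (g : ℕ) : Type := Fin g × Sym2 (Fin g)

/-- The polynomial ring `ℂ[R₁,…,R_g]` in the entries of `g` generic symmetric `g×g` matrices. -/
abbrev PolyR (g : ℕ) : Type := MvPolynomial (RVars g) ℂ

/-- `det(t₁R₁ + ⋯ + t_gR_g)` as a polynomial in `t₁,…,t_g` over `ℂ[R₁,…,R_g]`. -/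
def detT (g : ℕ) : MvPolynomial (Fin g) (PolyR g) :=
  (Matrix.of fun i j : Fin g =>
      ∑ h : Fin g, MvPolynomial.X h *
        MvPolynomial.C (MvPolynomial.X (h, s(i, j)) : PolyR g)).det

/-- `R(n)`: the coefficient of `t₁^{n₁}⋯t_g^{n_g}` in `det(t₁R₁+⋯+t_gR_g)`. -/
def Rpoly (g : ℕ) (n : Fin g → ℕ) : PolyR g :=
  MvPolynomial.coeff (Finsupp.equivFunOnFinite.symm n) (detT g)

/-- The substitution `P(R₁,…,R_g) ↦ P(AR₁Aᵀ,…,AR_gAᵀ)`. -/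
def substA (g : ℕ) (A : Matrix (Fin g) (Fin g) ℂ) : PolyR g →ₐ[ℂ] PolyR g :=
  MvPolynomial.aeval fun v : RVars g =>
    Sym2.lift ⟨fun i j => ∑ u : Fin g, ∑ w : Fin g,
        MvPolynomial.C (A i u) * MvPolynomial.C (A j w) * MvPolynomial.X (v.1, s(u, w)),
      by
        intro i j
        dsimp only
        rw [Finset.sum_comm]
        refine Finset.sum_congr rfl fun u _ => Finset.sum_congr rfl fun w _ => ?_
        rw [Sym2.eq_swap]
        ring⟩ v.2


def Ccoef (g : ℕ) (a : ℂ) (m : ℕ) : ℂ :=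
  if m = 1 then ((g : ℂ) - 1) * ∏ i ∈ Finset.Icc 1 (g - 1), (2 * a - (i : ℂ))
  else (-1 : ℂ) ^ (m - 1) * (Nat.factorial (m - 1) : ℂ) * (2 * a) ^ (m - 1) *
    ∏ i ∈ Finset.Icc m (g - 1), (2 * a - (i : ℂ))

def ccoef (g : ℕ) (a : ℂ) (n : Fin g → ℕ) : ℂ :=
  if ∀ h, n h = 1 then Ccoef g a 1
  else if 2 ≤ (Finset.univ.filter fun h => 1 < n h).card then 0
  else Ccoef g a (Finset.univ.sup n)

def Qpoly (g : ℕ) (a : ℂ) : PolyR g :=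
  (Ccoef g a 1)⁻¹ • ∑ n ∈ Finset.Nat.antidiagonalTuple g g, ccoef g a n • Rpoly g n

/-- Variables of the `g × (gk)` matrix `X = (X₁,…,X_g)`: `(i, h, ν)` is the entry of `X_h`
in row `i` and column `ν`. -/
abbrev XVars (g k : ℕ) : Type := Fin g × Fin g × Fin k

/-- The substitution `P ↦ P̃ = P(X₁X₁ᵀ,…,X_gX_gᵀ)`. -/
def toXm (g k : ℕ) : PolyR g →ₐ[ℂ] MvPolynomial (XVars g k) ℂ :=
  MvPolynomial.aeval fun v : RVars g =>
    Sym2.lift ⟨fun i j => ∑ ν : Fin k,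
        MvPolynomial.X (i, v.1, ν) * MvPolynomial.X (j, v.1, ν),
      fun i j => Finset.sum_congr rfl fun ν _ => mul_comm _ _⟩ v.2

/-- `Δ_{ij} = Σ_ν ∂²/∂x_{iν}∂x_{jν}`, the sum over all `gk` columns of `X`. -/
def Deltam (g k : ℕ) (i j : Fin g) (p : MvPolynomial (XVars g k) ℂ) :
    MvPolynomial (XVars g k) ℂ :=
  ∑ h : Fin g, ∑ ν : Fin k, MvPolynomial.pderiv (i, h, ν) (MvPolynomial.pderiv (j, h, ν) p)


namespace S17

open MvPolynomial Finset

variable {σ : Type*} {R : Type*} [CommRing R]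

theorem pderiv_finset_prod (v : σ) {α : Type*} [DecidableEq α] (s : Finset α)
    (f : α → MvPolynomial σ R) :
    pderiv v (∏ a ∈ s, f a) = ∑ a ∈ s, pderiv v (f a) * ∏ b ∈ s.erase a, f b := by
  classical
  induction s using Finset.induction_on with
  | empty => simp
  | @insert a s ha ih =>
    rw [Finset.prod_insert ha, pderiv_mul, ih, Finset.sum_insert ha, Finset.erase_insert ha]
    rw [Finset.mul_sum]
    congr 1
    refine Finset.sum_congr rfl fun b hb => ?_
    rw [Finset.erase_insert_of_ne (by rintro rfl; exact ha hb)]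
    rw [Finset.prod_insert (fun h => ha (Finset.mem_of_mem_erase h))]
    ring

theorem pderiv_det (v : σ) {n : ℕ} (M : Matrix (Fin n) (Fin n) (MvPolynomial σ R)) :
    pderiv v M.det
      = ∑ q : Fin n, (M.updateCol q fun p => pderiv v (M p q)).det := by
  classical
  simp only [Matrix.det_apply, Units.smul_def]
  rw [map_sum]
  rw [Finset.sum_comm]
  refine Finset.sum_congr rfl fun σ' _ => ?_
  rw [map_zsmul, pderiv_finset_prod]
  rw [Finset.smul_sum]
  refine Finset.sum_congr rfl fun q _ => ?_
  congr 1
  rw [Finset.prod_congr rfl (fun b hb => ?_), ← Finset.prod_erase_mul _ _ (Finset.mem_univ q)]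
  · rw [Matrix.updateCol_self, mul_comm]
  · rw [Matrix.updateCol_apply, if_neg (Finset.ne_of_mem_erase hb)]

/-- column indices of the big matrix `X` -/
abbrev Col (g k : ℕ) := Fin g × Fin k

abbrev MX (g k : ℕ) := MvPolynomial (XVars g k) ℂ

/-- matrix whose `q`-th column is the `ψ q`-th column of `X` -/
def Nmat (g k : ℕ) (ψ : Fin g → Col g k) : Matrix (Fin g) (Fin g) (MX g k) :=
  Matrix.of fun p q => MvPolynomial.X (p, ψ q)

/-- number of columns selected from each block -/
def mtype (g k : ℕ) (ψ : Fin g → Col g k) : Fin g → ℕ :=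
  fun h => (Finset.univ.filter fun q => (ψ q).1 = h).card

def ecol (g k : ℕ) (i : Fin g) : Fin g → MX g k := fun p => if p = i then 1 else 0

def cofM (g k : ℕ) (ψ : Fin g → Col g k) (i : Fin g) (q : Fin g) : MX g k :=
  ((Nmat g k ψ).updateCol q (ecol g k i)).det

lemma counting {α : Type*} {β : Type*} [Fintype β] [DecidableEq β] (s : Finset α) (f : α → β) :
    ∑ b : β, (s.filter fun a => f a = b).card = s.card := by
  simpa only [Finset.card_eq_sum_ones] using Finset.sum_fiberwise s f (fun _ => (1 : ℕ))

lemma sum_mtype (g k : ℕ) (φ : Fin g → Col g k) : ∑ h, mtype g k φ h = g := by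
  simpa [mtype] using counting (Finset.univ : Finset (Fin g)) (fun q => (φ q).1)

lemma toXm_X (g k : ℕ) (h : Fin g) (i j : Fin g) :
    toXm g k (MvPolynomial.X (h, s(i, j))) =
      ∑ ν : Fin k, MvPolynomial.X (i, h, ν) * MvPolynomial.X (j, h, ν) := by
  simp [toXm]

lemma map_detT (g k : ℕ) :
    MvPolynomial.map (toXm g k).toRingHom (detT g) =
    (Matrix.of fun i j : Fin g =>
      ∑ c : Col g k, MvPolynomial.X c.1 *
        MvPolynomial.C (MvPolynomial.X (i, c) * MvPolynomial.X (j, c) : MX g k)).det := by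
  rw [detT, RingHom.map_det]
  congr 1
  apply Matrix.ext
  intro i j
  simp only [RingHom.mapMatrix_apply]
  simp only [Matrix.map_apply, Matrix.of_apply, map_sum, map_mul, MvPolynomial.map_X,
    MvPolynomial.map_C]
  refine Eq.symm ?_
  rw [Fintype.sum_prod_type]
  apply Finset.sum_congr rfl
  intro h _
  refine Eq.symm ?_
  rw [show ((toXm g k).toRingHom (MvPolynomial.X (h, s(i, j)))) = _ from toXm_X g k h i j]
  simp [Finset.mul_sum]

lemma prod_X_single {τ : Type*} [DecidableEq τ] {S : Type*} [CommSemiring S] {α : Type*}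
    [DecidableEq α] (s : Finset α) (f : α → τ) :
    (∏ i ∈ s, (MvPolynomial.X (f i) : MvPolynomial τ S)) =
      MvPolynomial.monomial (∑ i ∈ s, Finsupp.single (f i) 1) 1 := by
  induction s using Finset.induction_on with
  | empty => simp
  | @insert a s ha ih =>
    rw [Finset.prod_insert ha, Finset.sum_insert ha, ih, ← pow_one (MvPolynomial.X (f a)),
      MvPolynomial.X_pow_eq_monomial, MvPolynomial.monomial_mul, one_mul]

lemma sum_single_eq_iff (g k : ℕ) (φ : Fin g → Col g k) (n : Fin g → ℕ) :
    (∑ i : Fin g, Finsupp.single (φ i).1 (1 : ℕ)) = Finsupp.equivFunOnFinite.symm n ↔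
      mtype g k φ = n := by
  rw [Finsupp.ext_iff, funext_iff]
  apply forall_congr'
  intro h
  rw [Finset.sum_apply']
  simp only [Finsupp.single_apply, Finsupp.equivFunOnFinite_symm_apply_apply]
  rw [mtype, Finset.card_filter]

lemma toXm_Rpoly (g k : ℕ) (n : Fin g → ℕ) :
    toXm g k (Rpoly g n) =
      ∑ φ : Fin g → Col g k,
        if mtype g k φ = n then
          ((∏ i, (MvPolynomial.X (i, φ i) : MX g k)) * (Nmat g k φ).det) else 0 := by
  classical
  have h1 : toXm g k (Rpoly g n) = MvPolynomial.coeff (Finsupp.equivFunOnFinite.symm n)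
      (MvPolynomial.map (toXm g k).toRingHom (detT g)) := by
    rw [MvPolynomial.coeff_map]; rfl
  rw [h1, map_detT, Matrix.det_apply, MvPolynomial.coeff_sum]
  have step : ∀ σ : Equiv.Perm (Fin g),
      MvPolynomial.coeff (Finsupp.equivFunOnFinite.symm n)
        (Equiv.Perm.sign σ • ∏ i, (Matrix.of fun i j : Fin g =>
          ∑ c : Col g k, MvPolynomial.X c.1 *
            MvPolynomial.C (MvPolynomial.X (i, c) * MvPolynomial.X (j, c) : MX g k)) (σ i) i)
      = ∑ φ : Fin g → Col g k, if mtype g k φ = n then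
          ((Equiv.Perm.sign σ : ℤ) • ((∏ i, (MvPolynomial.X (σ i, φ i) : MX g k)) *
            ∏ i, (MvPolynomial.X (i, φ i) : MX g k))) else 0 := by
    intro σ
    simp only [Matrix.of_apply, Units.smul_def]
    have hexp : (∏ x : Fin g, ∑ c : Col g k, (MvPolynomial.X c.1 : MvPolynomial (Fin g) (MX g k)) *
        MvPolynomial.C (MvPolynomial.X ((σ x), c) * MvPolynomial.X (x, c) : MX g k))
        = ∑ φ : Fin g → Col g k, ∏ x : Fin g,
            (MvPolynomial.X (φ x).1 : MvPolynomial (Fin g) (MX g k)) *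
            MvPolynomial.C (MvPolynomial.X ((σ x), φ x) * MvPolynomial.X (x, φ x) : MX g k) :=
      Fintype.prod_sum _
    rw [hexp, MvPolynomial.coeff_smul, MvPolynomial.coeff_sum, Finset.smul_sum]
    refine Finset.sum_congr rfl fun φ _ => ?_
    have hC : (∏ x : Fin g, MvPolynomial.C
        (MvPolynomial.X ((σ x), φ x) * MvPolynomial.X (x, φ x) : MX g k))
        = MvPolynomial.C (∏ x : Fin g,
            (MvPolynomial.X ((σ x), φ x) * MvPolynomial.X (x, φ x) : MX g k)) :=
      (map_prod (MvPolynomial.C : MX g k →+* MvPolynomial (Fin g) (MX g k)) _ Finset.univ).symm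
    rw [Finset.prod_mul_distrib, prod_X_single Finset.univ (fun i => (φ i).1), hC,
      mul_comm, MvPolynomial.coeff_C_mul, MvPolynomial.coeff_monomial]
    simp only [sum_single_eq_iff g k φ n]
    by_cases hc : mtype g k φ = n
    · rw [if_pos hc, if_pos hc, mul_one, Finset.prod_mul_distrib]
    · rw [if_neg hc, if_neg hc, mul_zero, smul_zero]
  rw [Finset.sum_congr rfl fun σ _ => step σ, Finset.sum_comm]
  refine Finset.sum_congr rfl fun φ _ => ?_
  by_cases hc : mtype g k φ = n
  · simp only [if_pos hc]
    rw [Matrix.det_apply, Finset.mul_sum]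
    refine Finset.sum_congr rfl fun σ _ => ?_
    simp only [Nmat, Matrix.of_apply, Units.smul_def]
    rw [mul_smul_comm, mul_comm]
  · simp only [if_neg hc, Finset.sum_const_zero]


lemma mtype_mem (g k : ℕ) (φ : Fin g → Col g k) :
    mtype g k φ ∈ Finset.Nat.antidiagonalTuple g g := by
  rw [Finset.Nat.mem_antidiagonalTuple]; exact sum_mtype g k φ

lemma toXm_Qpoly (g k : ℕ) (a : ℂ) :
    toXm g k (Qpoly g a) = (Ccoef g a 1)⁻¹ • ∑ φ : Fin g → Col g k,
        ccoef g a (mtype g k φ) •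
          ((∏ i, (MvPolynomial.X (i, φ i) : MX g k)) * (Nmat g k φ).det) := by
  rw [Qpoly, map_smul, map_sum]
  congr 1
  calc ∑ n ∈ Finset.Nat.antidiagonalTuple g g, toXm g k (ccoef g a n • Rpoly g n)
      = ∑ n ∈ Finset.Nat.antidiagonalTuple g g, ∑ φ : Fin g → Col g k,
          (if mtype g k φ = n then ccoef g a n •
            ((∏ i, (MvPolynomial.X (i, φ i) : MX g k)) * (Nmat g k φ).det) else 0) := by
        refine Finset.sum_congr rfl fun n _ => ?_
        rw [map_smul, toXm_Rpoly, Finset.smul_sum]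
        exact Finset.sum_congr rfl fun φ _ => by rw [smul_ite, smul_zero]
    _ = ∑ φ : Fin g → Col g k, ∑ n ∈ Finset.Nat.antidiagonalTuple g g,
          (if mtype g k φ = n then ccoef g a n •
            ((∏ i, (MvPolynomial.X (i, φ i) : MX g k)) * (Nmat g k φ).det) else 0) :=
        Finset.sum_comm
    _ = _ := by
        refine Finset.sum_congr rfl fun φ _ => ?_
        rw [Finset.sum_ite_eq, if_pos (mtype_mem g k φ)]

lemma mtype_comp (g k : ℕ) (ψ : Fin g → Col g k) (π : Equiv.Perm (Fin g)) :
    mtype g k (ψ ∘ π) = mtype g k ψ := by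
  funext h
  refine Finset.card_bij (fun q _ => π q) (fun q hq => ?_) (fun q1 h1 q2 h2 e => ?_)
    (fun q hq => ⟨π.symm q, ?_, by simp⟩)
  · simpa using (Finset.mem_filter.mp hq).2
  · exact π.injective e
  · simpa using (Finset.mem_filter.mp hq).2

lemma Nmat_comp (g k : ℕ) (ψ : Fin g → Col g k) (π : Equiv.Perm (Fin g)) :
    (Nmat g k (ψ ∘ π)).det = (Equiv.Perm.sign π : ℤ) • (Nmat g k ψ).det := by
  have : Nmat g k (ψ ∘ π) = (Nmat g k ψ).submatrix id π := rfl
  rw [this, Matrix.det_permute' π (Nmat g k ψ), zsmul_eq_mul]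

lemma det_sq_expand (g k : ℕ) (ψ : Fin g → Col g k) :
    (Nmat g k ψ).det ^ 2 = ∑ π : Equiv.Perm (Fin g),
      (∏ i, (MvPolynomial.X (i, (ψ ∘ π) i) : MX g k)) * (Nmat g k (ψ ∘ π)).det := by
  have h2 : (Nmat g k ψ).det = ∑ π : Equiv.Perm (Fin g),
      Equiv.Perm.sign π • ∏ i, (MvPolynomial.X (i, ψ (π i)) : MX g k) := by
    rw [← Matrix.det_transpose, Matrix.det_apply]
    rfl
  calc (Nmat g k ψ).det ^ 2 = (Nmat g k ψ).det * (Nmat g k ψ).det := sq _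
    _ = (∑ π : Equiv.Perm (Fin g),
          Equiv.Perm.sign π • ∏ i, (MvPolynomial.X (i, ψ (π i)) : MX g k)) * (Nmat g k ψ).det := by
        rw [← h2]
    _ = _ := by
        rw [Finset.sum_mul]
        refine Finset.sum_congr rfl fun π _ => ?_
        rw [Nmat_comp, Units.smul_def, smul_mul_assoc, mul_smul_comm]
        rfl

lemma sym_step (g k : ℕ) (a : ℂ) :
    ∑ ψ : Fin g → Col g k, ccoef g a (mtype g k ψ) • ((Nmat g k ψ).det ^ 2)
      = g.factorial • ∑ φ : Fin g → Col g k, ccoef g a (mtype g k φ) •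
          ((∏ i, (MvPolynomial.X (i, φ i) : MX g k)) * (Nmat g k φ).det) := by
  calc ∑ ψ : Fin g → Col g k, ccoef g a (mtype g k ψ) • ((Nmat g k ψ).det ^ 2)
      = ∑ ψ : Fin g → Col g k, ∑ π : Equiv.Perm (Fin g), ccoef g a (mtype g k (ψ ∘ π)) •
          ((∏ i, (MvPolynomial.X (i, (ψ ∘ π) i) : MX g k)) * (Nmat g k (ψ ∘ π)).det) := by
        refine Finset.sum_congr rfl fun ψ _ => ?_
        rw [det_sq_expand, Finset.smul_sum]
        exact Finset.sum_congr rfl fun π _ => by rw [mtype_comp]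
    _ = ∑ π : Equiv.Perm (Fin g), ∑ ψ : Fin g → Col g k, ccoef g a (mtype g k (ψ ∘ π)) •
          ((∏ i, (MvPolynomial.X (i, (ψ ∘ π) i) : MX g k)) * (Nmat g k (ψ ∘ π)).det) :=
        Finset.sum_comm
    _ = ∑ _π : Equiv.Perm (Fin g), ∑ φ : Fin g → Col g k, ccoef g a (mtype g k φ) •
          ((∏ i, (MvPolynomial.X (i, φ i) : MX g k)) * (Nmat g k φ).det) := by
        refine Finset.sum_congr rfl fun π _ => ?_
        exact Equiv.sum_comp (Equiv.arrowCongr π.symm (Equiv.refl (Col g k)))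
          (fun φ : Fin g → Col g k => ccoef g a (mtype g k φ) •
            ((∏ i, (MvPolynomial.X (i, φ i) : MX g k)) * (Nmat g k φ).det))
    _ = _ := by
        rw [Finset.sum_const, Finset.card_univ, Fintype.card_perm, Fintype.card_fin]

lemma toXm_Qpoly' (g k : ℕ) (a : ℂ) :
    toXm g k (Qpoly g a) = ((g.factorial : ℂ)⁻¹ * (Ccoef g a 1)⁻¹) •
      ∑ ψ : Fin g → Col g k, ccoef g a (mtype g k ψ) • ((Nmat g k ψ).det ^ 2) := by
  rw [toXm_Qpoly, sym_step, ← Nat.cast_smul_eq_nsmul ℂ, smul_smul]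
  congr 1
  have hf : (g.factorial : ℂ) ≠ 0 := by exact_mod_cast g.factorial_ne_zero
  rw [mul_comm ((g.factorial : ℂ))⁻¹ (Ccoef g a 1)⁻¹, mul_assoc, inv_mul_cancel₀ hf, mul_one]

lemma Deltam_eq_sum (g k : ℕ) (i j : Fin g) (p : MX g k) :
    Deltam g k i j p = ∑ c : Col g k, pderiv (i, c) (pderiv (j, c) p) := by
  rw [Deltam]
  exact (Fintype.sum_prod_type fun c : Col g k => pderiv (i, c) (pderiv (j, c) p)).symm

lemma Deltam_sum (g k : ℕ) (i j : Fin g) {α : Type*} (s : Finset α) (f : α → MX g k) :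
    Deltam g k i j (∑ t ∈ s, f t) = ∑ t ∈ s, Deltam g k i j (f t) := by
  simp only [Deltam_eq_sum, map_sum]
  rw [Finset.sum_comm]

lemma Deltam_smul (g k : ℕ) (i j : Fin g) (c : ℂ) (p : MX g k) :
    Deltam g k i j (c • p) = c • Deltam g k i j p := by
  simp only [Deltam_eq_sum]
  rw [Finset.smul_sum]
  refine Finset.sum_congr rfl fun c' _ => ?_
  rw [Derivation.map_smul, Derivation.map_smul]

lemma pderiv_Nmat_entry (g k : ℕ) (ψ : Fin g → Col g k) (j p q : Fin g) (c : Col g k) :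
    pderiv ((j, c) : XVars g k) (Nmat g k ψ p q)
      = if ψ q = c ∧ p = j then 1 else 0 := by
  show pderiv ((j, c) : XVars g k) (MvPolynomial.X (p, ψ q)) = _
  rw [MvPolynomial.pderiv_X, Pi.single_apply]
  refine if_congr ?_ rfl rfl
  simp only [Prod.mk.injEq]
  exact and_comm

lemma pderiv_Nmat_det (g k : ℕ) (ψ : Fin g → Col g k) (j : Fin g) (c : Col g k) :
    pderiv ((j, c) : XVars g k) (Nmat g k ψ).det
      = ∑ q : Fin g, if ψ q = c then cofM g k ψ j q else 0 := by
  rw [pderiv_det]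
  refine Finset.sum_congr rfl fun q _ => ?_
  by_cases hc : ψ q = c
  · rw [if_pos hc, cofM]
    have he : (fun p => pderiv ((j, c) : XVars g k) (Nmat g k ψ p q)) = ecol g k j := by
      funext p
      rw [pderiv_Nmat_entry, ecol]
      simp [hc]
    rw [he]
  · rw [if_neg hc]
    apply Matrix.det_eq_zero_of_column_eq_zero q
    intro p
    rw [Matrix.updateCol_self, pderiv_Nmat_entry]
    simp [hc]

lemma pderiv_cofM (g k : ℕ) (ψ : Fin g → Col g k) (hinj : Function.Injective ψ)
    (i j q : Fin g) (c : Col g k) (hq : ψ q = c) :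
    pderiv ((i, c) : XVars g k) (cofM g k ψ j q) = 0 := by
  rw [cofM, pderiv_det]
  refine Finset.sum_eq_zero fun q' _ => ?_
  apply Matrix.det_eq_zero_of_column_eq_zero q'
  intro p
  rw [Matrix.updateCol_self]
  by_cases h' : q' = q
  · subst h'
    rw [Matrix.updateCol_apply, if_pos rfl, ecol]
    split_ifs <;> simp
  · rw [Matrix.updateCol_apply, if_neg h', pderiv_Nmat_entry]
    have : ψ q' ≠ c := fun e => h' (hinj (e.trans hq.symm))
    simp [this]

lemma det_Nmat_eq_zero (g k : ℕ) (ψ : Fin g → Col g k) (hinj : ¬ Function.Injective ψ) :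
    (Nmat g k ψ).det = 0 := by
  simp only [Function.Injective, not_forall] at hinj
  obtain ⟨q1, q2, he, hne⟩ := hinj
  refine Matrix.det_zero_of_column_eq hne fun p => ?_
  show MvPolynomial.X (p, ψ q1) = MvPolynomial.X (p, ψ q2)
  rw [he]

lemma Deltam_det_sq (g k : ℕ) (ψ : Fin g → Col g k) (hinj : Function.Injective ψ)
    (i j : Fin g) :
    Deltam g k i j ((Nmat g k ψ).det ^ 2)
      = ∑ q : Fin g, 2 * (cofM g k ψ i q * cofM g k ψ j q) := by
  rw [Deltam_eq_sum]
  have per_c : ∀ c : Col g k,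
      pderiv ((i, c) : XVars g k) (pderiv ((j, c) : XVars g k) ((Nmat g k ψ).det ^ 2))
      = 2 * ((∑ q : Fin g, if ψ q = c then cofM g k ψ i q else 0) *
             (∑ q : Fin g, if ψ q = c then cofM g k ψ j q else 0)) := by
    intro c
    have hz : pderiv ((i, c) : XVars g k)
        (∑ q : Fin g, if ψ q = c then cofM g k ψ j q else 0) = 0 := by
      rw [map_sum]
      refine Finset.sum_eq_zero fun q _ => ?_
      by_cases hc : ψ q = c
      · rw [if_pos hc, pderiv_cofM g k ψ hinj i j q c hc]
      · rw [if_neg hc, map_zero]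
    rw [sq, pderiv_mul, map_add, pderiv_mul, pderiv_mul, pderiv_Nmat_det, hz,
      pderiv_Nmat_det]
    ring
  rw [Finset.sum_congr rfl fun c _ => per_c c, ← Finset.mul_sum]
  rw [← Finset.mul_sum]
  congr 1
  calc ∑ c : Col g k, (∑ q : Fin g, if ψ q = c then cofM g k ψ i q else 0) *
        (∑ q' : Fin g, if ψ q' = c then cofM g k ψ j q' else 0)
      = ∑ c : Col g k, ∑ q : Fin g, ∑ q' : Fin g,
          (if ψ q = c then cofM g k ψ i q else 0) * (if ψ q' = c then cofM g k ψ j q' else 0) := by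
        exact Finset.sum_congr rfl fun c _ => Finset.sum_mul_sum _ _ _ _
    _ = ∑ q : Fin g, ∑ q' : Fin g, ∑ c : Col g k,
          (if ψ q = c then cofM g k ψ i q else 0) * (if ψ q' = c then cofM g k ψ j q' else 0) := by
        rw [Finset.sum_comm]
        exact Finset.sum_congr rfl fun q _ => Finset.sum_comm
    _ = ∑ q : Fin g, ∑ q' : Fin g,
          (if ψ q = ψ q' then cofM g k ψ i q * cofM g k ψ j q' else 0) := by
        refine Finset.sum_congr rfl fun q _ => Finset.sum_congr rfl fun q' _ => ?_
        simp only [ite_mul, zero_mul, mul_ite, mul_zero]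
        rw [Finset.sum_ite_eq Finset.univ (ψ q')
          (fun c => if ψ q = c then cofM g k ψ i q * cofM g k ψ j q' else 0)]
        rw [if_pos (Finset.mem_univ _)]
    _ = ∑ q : Fin g, cofM g k ψ i q * cofM g k ψ j q := by
        refine Finset.sum_congr rfl fun q _ => ?_
        rw [Finset.sum_eq_single q (fun q' _ hne => ?_) (fun h => absurd (Finset.mem_univ q) h)]
        · rw [if_pos rfl]
        · rw [if_neg (fun e => hne (hinj e).symm)]

lemma Ccoef_succ (g : ℕ) (k : ℕ) (m : ℕ) (hm : 2 ≤ m) (hmg : m ≤ g - 1) :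
    ((k : ℂ) - m) * Ccoef g ((k : ℂ)/2) (m + 1) + m * k * Ccoef g ((k : ℂ)/2) m = 0 := by
  obtain ⟨n, rfl⟩ : ∃ n, m = n + 2 := ⟨m - 2, by omega⟩
  have h2 : (2 : ℂ) * ((k : ℂ)/2) = (k : ℂ) := by ring
  rw [Ccoef, if_neg (by omega), Ccoef, if_neg (by omega), h2]
  have hsplit : ∏ i ∈ Finset.Icc (n+2) (g-1), ((k:ℂ) - i)
      = ((k:ℂ) - (n+2 : ℕ)) * ∏ i ∈ Finset.Icc (n+3) (g-1), ((k:ℂ) - i) := by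
    rw [← Finset.mul_prod_erase _ _ (Finset.mem_Icc.mpr ⟨le_refl _, hmg⟩),
      Finset.Icc_erase_left, ← Finset.Icc_add_one_left_eq_Ioc]
    rfl
  rw [hsplit]
  simp only [Nat.succ_sub_one]
  rw [show Nat.factorial (n+2) = (n+2) * Nat.factorial (n+1) from Nat.factorial_succ (n+1)]
  push_cast
  ring

lemma Ccoef_one (g : ℕ) (hg : 2 ≤ g) (k : ℕ) :
    (k : ℂ) * Ccoef g ((k : ℂ)/2) 1 + ((g : ℂ) - 1) * ((k : ℂ) - 1) * Ccoef g ((k : ℂ)/2) 2 = 0 := by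
  have h2 : (2 : ℂ) * ((k : ℂ)/2) = (k : ℂ) := by ring
  rw [Ccoef, if_pos rfl, Ccoef, if_neg (by omega), h2]
  have hsplit : ∏ i ∈ Finset.Icc 1 (g-1), ((k:ℂ) - i)
      = ((k:ℂ) - 1) * ∏ i ∈ Finset.Icc 2 (g-1), ((k:ℂ) - i) := by
    rw [← Finset.mul_prod_erase _ _ (Finset.mem_Icc.mpr ⟨le_refl _, by omega⟩),
      Finset.Icc_erase_left, ← Finset.Icc_add_one_left_eq_Ioc]
    norm_num
  rw [hsplit]
  norm_num [Nat.factorial]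
  ring

lemma ccoef_two_big (g : ℕ) (a : ℂ) (n : Fin g → ℕ) (v w : Fin g) (hvw : v ≠ w)
    (hv : 2 ≤ n v) (hw : 2 ≤ n w) : ccoef g a n = 0 := by
  rw [ccoef, if_neg, if_pos]
  · have hsub : ({v, w} : Finset (Fin g)) ⊆ Finset.univ.filter (fun h => 1 < n h) := by
      intro x hx
      rcases Finset.mem_insert.mp hx with rfl | hx
      · simp only [Finset.mem_filter, Finset.mem_univ, true_and]; omega
      · rw [Finset.mem_singleton] at hx; subst hx
        simp only [Finset.mem_filter, Finset.mem_univ, true_and]; omega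
    calc 2 = ({v, w} : Finset (Fin g)).card := (Finset.card_pair hvw).symm
      _ ≤ _ := Finset.card_le_card hsub
  · intro hall; rw [hall v] at hv; omega

lemma ccoef_single_big (g : ℕ) (a : ℂ) (n : Fin g → ℕ) (v : Fin g) (M : ℕ) (hM : 2 ≤ M)
    (hv : n v = M) (hoth : ∀ h, h ≠ v → n h ≤ 1) : ccoef g a n = Ccoef g a M := by
  have hflt : Finset.univ.filter (fun h => 1 < n h) = {v} := by
    ext h
    simp only [Finset.mem_filter, Finset.mem_univ, true_and, Finset.mem_singleton]
    constructor
    · intro hh; by_contra hne; exact absurd (hoth h hne) (by omega)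
    · rintro rfl; omega
  rw [ccoef, if_neg, if_neg]
  · congr 1
    apply le_antisymm
    · refine Finset.sup_le fun h _ => ?_
      rcases eq_or_ne h v with rfl | hne
      · omega
      · exact (hoth h hne).trans (by omega)
    · exact hv ▸ Finset.le_sup (Finset.mem_univ v)
  · rw [hflt, Finset.card_singleton]; omega
  · intro hall; rw [hall v] at hv; omega

lemma key_sum (g k : ℕ) (hg : 2 ≤ g) (u : Fin g → ℕ) (hsum : ∑ h, u h = g - 1)
    (hle : ∀ h, u h ≤ k) :
    ∑ h : Fin g, ((k - u h : ℕ) : ℂ) * ccoef g ((k : ℂ)/2) (u + Pi.single h 1) = 0 := by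
  classical
  have hnapp : ∀ h0 h : Fin g, (u + Pi.single h0 1 : Fin g → ℕ) h
      = u h + if h = h0 then 1 else 0 := by
    intro h0 h; rw [Pi.add_apply, Pi.single_apply]
  set B := Finset.univ.filter (fun h => 2 ≤ u h) with hBdef
  have hmemB : ∀ h, h ∈ B ↔ 2 ≤ u h := by
    intro h; rw [hBdef, Finset.mem_filter]; simp
  rcases lt_trichotomy B.card 1 with hc | hc | hc
  · -- case all u h ≤ 1
    have hu1 : ∀ h, u h ≤ 1 := by
      intro h
      by_contra hh
      have : h ∈ B := (hmemB h).mpr (by omega)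
      have := Finset.card_pos.mpr ⟨h, this⟩
      omega
    obtain ⟨h0, hu0⟩ : ∃ h0, u h0 = 0 := by
      by_contra hno
      push_neg at hno
      have hall : ∀ h : Fin g, u h = 1 := fun h => by have := hu1 h; have := hno h; omega
      rw [Finset.sum_congr rfl fun h _ => hall h] at hsum
      simp [Finset.card_univ] at hsum
      omega
    have huniq : ∀ h, h ≠ h0 → u h = 1 := by
      intro h1 hne
      by_contra hh
      have h1z : u h1 = 0 := by have := hu1 h1; omega
      have hlee : ∑ h, u h ≤ g - 2 := by
        calc ∑ h, u h = ∑ h ∈ Finset.univ.erase h0, u h :=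
              (Finset.sum_erase _ hu0).symm
          _ = ∑ h ∈ (Finset.univ.erase h0).erase h1, u h :=
              (Finset.sum_erase _ h1z).symm
          _ ≤ ((Finset.univ.erase h0).erase h1).card * 1 :=
              Finset.sum_le_card_nsmul _ _ 1 fun h _ => hu1 h
          _ ≤ g - 2 := by
              rw [mul_one,
                Finset.card_erase_of_mem (Finset.mem_erase.mpr ⟨hne, Finset.mem_univ _⟩),
                Finset.card_erase_of_mem (Finset.mem_univ _), Finset.card_univ, Fintype.card_fin]
              omega
      omega
    rw [← Finset.add_sum_erase _ _ (Finset.mem_univ h0)]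
    have hterm0 : ((k - u h0 : ℕ) : ℂ) * ccoef g ((k : ℂ)/2) (u + Pi.single h0 1)
        = (k : ℂ) * Ccoef g ((k : ℂ)/2) 1 := by
      rw [hu0, Nat.sub_zero]
      congr 1
      rw [ccoef, if_pos]
      intro h
      rw [hnapp]
      rcases eq_or_ne h h0 with rfl | hne
      · rw [if_pos rfl, hu0]
      · rw [if_neg hne, huniq h hne]
    have hterm1 : ∀ h1 ∈ Finset.univ.erase h0,
        ((k - u h1 : ℕ) : ℂ) * ccoef g ((k : ℂ)/2) (u + Pi.single h1 1)
        = ((k : ℂ) - 1) * Ccoef g ((k : ℂ)/2) 2 := by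
      intro h1 hh1
      have hne : h1 ≠ h0 := (Finset.mem_erase.mp hh1).1
      have hone : u h1 = 1 := huniq h1 hne
      have h1k : 1 ≤ k := hone ▸ hle h1
      rw [hone, Nat.cast_sub h1k, Nat.cast_one]
      congr 1
      refine ccoef_single_big g _ _ h1 2 le_rfl ?_ ?_
      · rw [hnapp, if_pos rfl, hone]
      · intro h hne2
        rw [hnapp, if_neg hne2]
        have := hu1 h
        omega
    rw [hterm0, Finset.sum_congr rfl hterm1, Finset.sum_const,
      Finset.card_erase_of_mem (Finset.mem_univ h0), Finset.card_univ, Fintype.card_fin,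
      nsmul_eq_mul, Nat.cast_sub (by omega : 1 ≤ g), Nat.cast_one]
    linear_combination Ccoef_one g hg k
  · -- case exactly one big entry
    obtain ⟨v, hv⟩ := Finset.card_eq_one.mp hc
    have hvB : 2 ≤ u v := (hmemB v).mp (hv ▸ Finset.mem_singleton_self v)
    have hoth : ∀ h, h ≠ v → u h ≤ 1 := by
      intro h hne
      by_contra hh
      have hmem : h ∈ B := (hmemB h).mpr (by omega)
      rw [hv, Finset.mem_singleton] at hmem
      exact hne hmem
    have hmg : u v ≤ g - 1 := by
      rw [← hsum]
      exact Finset.single_le_sum (fun h _ => Nat.zero_le _) (Finset.mem_univ v)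
    set Z := (Finset.univ.erase v).filter (fun h => u h = 0) with hZdef
    have hcards : Z.card + ((Finset.univ.erase v).filter (fun h => ¬ u h = 0)).card = g - 1 := by
      rw [hZdef, Finset.card_filter_add_card_filter_not,
        Finset.card_erase_of_mem (Finset.mem_univ v), Finset.card_univ, Fintype.card_fin]
    have hsum2 : ∑ h ∈ Finset.univ.erase v, u h
        = ((Finset.univ.erase v).filter (fun h => ¬ u h = 0)).card := by
      rw [← Finset.sum_filter_add_sum_filter_not (Finset.univ.erase v) (fun h => u h = 0)]
      rw [Finset.sum_congr rfl (fun h hh => (Finset.mem_filter.mp hh).2),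
        Finset.sum_const_zero, zero_add]
      rw [Finset.sum_congr rfl (fun h hh => ?_), Finset.sum_const, smul_eq_mul, mul_one]
      have h1 := (Finset.mem_filter.mp hh).2
      have h2 := hoth h (Finset.mem_erase.mp (Finset.mem_filter.mp hh).1).1
      omega
    have htot : u v + ∑ h ∈ Finset.univ.erase v, u h = g - 1 := by
      rw [Finset.add_sum_erase _ u (Finset.mem_univ v)]; exact hsum
    have hZm : Z.card = u v := by omega
    rw [← Finset.add_sum_erase _ _ (Finset.mem_univ v)]
    have htermv : ((k - u v : ℕ) : ℂ) * ccoef g ((k : ℂ)/2) (u + Pi.single v 1)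
        = ((k : ℂ) - (u v : ℕ)) * Ccoef g ((k : ℂ)/2) (u v + 1) := by
      rw [Nat.cast_sub (hle v)]
      congr 1
      refine ccoef_single_big g _ _ v (u v + 1) (by omega) ?_ ?_
      · rw [hnapp, if_pos rfl]
      · intro h hne
        rw [hnapp, if_neg hne]
        have := hoth h hne
        omega
    have hterm : ∀ h1 ∈ Finset.univ.erase v,
        ((k - u h1 : ℕ) : ℂ) * ccoef g ((k : ℂ)/2) (u + Pi.single h1 1)
        = if u h1 = 0 then (k : ℂ) * Ccoef g ((k : ℂ)/2) (u v) else 0 := by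
      intro h1 hh1
      have hne : h1 ≠ v := (Finset.mem_erase.mp hh1).1
      by_cases hz : u h1 = 0
      · rw [if_pos hz, hz, Nat.sub_zero]
        congr 1
        refine ccoef_single_big g _ _ v (u v) hvB ?_ ?_
        · rw [hnapp, if_neg (Ne.symm hne), add_zero]
        · intro h hne2
          rw [hnapp]
          rcases eq_or_ne h h1 with rfl | hne3
          · rw [if_pos rfl, hz]
          · rw [if_neg hne3]
            have := hoth h hne2
            omega
      · rw [if_neg hz]
        have hone : u h1 = 1 := by have := hoth h1 hne; omega
        rw [ccoef_two_big g _ _ v h1 (Ne.symm hne) ?_ ?_, mul_zero]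
        · rw [hnapp]
          have : (0 : ℕ) ≤ 1 := by omega
          omega
        · rw [hnapp, if_pos rfl]
          omega
    rw [htermv, Finset.sum_congr rfl hterm, ← Finset.sum_filter, ← hZdef, Finset.sum_const,
      hZm, nsmul_eq_mul]
    linear_combination Ccoef_succ g k (u v) hvB hmg
  · -- case at least two big entries
    obtain ⟨v, hvB, w, hwB, hvw⟩ := Finset.one_lt_card.mp hc
    refine Finset.sum_eq_zero fun h0 _ => ?_
    rw [ccoef_two_big g _ _ v w hvw ?_ ?_, mul_zero]
    · rw [hnapp]; have := (hmemB v).mp hvB; omega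
    · rw [hnapp]; have := (hmemB w).mp hwB; omega

section Regroup

variable (g k : ℕ) (q : Fin g)

def urho (ρ : {j : Fin g // j ≠ q} → Col g k) : Fin g → ℕ :=
  fun h => (Finset.univ.filter fun j : {j : Fin g // j ≠ q} => (ρ j).1 = h).card

variable (ρ : {j : Fin g // j ≠ q} → Col g k)

lemma psiOf_at_q (c : Col g k) : (Equiv.funSplitAt q (Col g k)).symm (c, ρ) q = c := by
  rw [Equiv.funSplitAt_symm_apply, dif_pos rfl]

lemma psiOf_at_ne (c : Col g k) (j : Fin g) (hj : j ≠ q) :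
    (Equiv.funSplitAt q (Col g k)).symm (c, ρ) j = ρ ⟨j, hj⟩ := by
  rw [Equiv.funSplitAt_symm_apply, dif_neg hj]

lemma inj_restrict (c : Col g k)
    (hinj : Function.Injective ((Equiv.funSplitAt q (Col g k)).symm (c, ρ))) :
    Function.Injective ρ := by
  intro j1 j2 he
  have h1 := psiOf_at_ne g k q ρ c j1 j1.2
  have h2 := psiOf_at_ne g k q ρ c j2 j2.2
  have : (j1 : Fin g) = (j2 : Fin g) := by
    apply hinj
    rw [Subtype.coe_eta] at h1 h2
    rw [h1, h2, he]
  exact Subtype.ext this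

lemma inj_iff (c : Col g k) (hρ : Function.Injective ρ) :
    Function.Injective ((Equiv.funSplitAt q (Col g k)).symm (c, ρ)) ↔
      c ∉ Finset.image ρ Finset.univ := by
  constructor
  · intro hinj hc
    obtain ⟨j0, _, hj0⟩ := Finset.mem_image.mp hc
    have h1 := psiOf_at_ne g k q ρ c j0 j0.2
    rw [Subtype.coe_eta, hj0] at h1
    have h2 := psiOf_at_q g k q ρ c
    have : (j0 : Fin g) = q := hinj (h1.trans h2.symm)
    exact j0.2 this
  · intro hc j1 j2 he
    by_cases h1 : j1 = q <;> by_cases h2 : j2 = q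
    · rw [h1, h2]
    · exfalso
      rw [h1, psiOf_at_q, psiOf_at_ne g k q ρ c j2 h2] at he
      exact hc (Finset.mem_image.mpr ⟨⟨j2, h2⟩, Finset.mem_univ _, he.symm⟩)
    · exfalso
      rw [h2, psiOf_at_q, psiOf_at_ne g k q ρ c j1 h1] at he
      exact hc (Finset.mem_image.mpr ⟨⟨j1, h1⟩, Finset.mem_univ _, he⟩)
    · rw [psiOf_at_ne g k q ρ c j1 h1, psiOf_at_ne g k q ρ c j2 h2] at he
      exact Subtype.ext_iff.mp (hρ he)

lemma mtype_psiOf (c : Col g k) :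
    mtype g k ((Equiv.funSplitAt q (Col g k)).symm (c, ρ)) = urho g k q ρ + Pi.single c.1 1 := by
  funext h
  rw [Pi.add_apply, Pi.single_apply, mtype, Finset.card_filter]
  rw [← Finset.add_sum_erase _ _ (Finset.mem_univ q)]
  rw [psiOf_at_q]
  rw [Finset.sum_subtype (Finset.univ.erase q) (p := fun j => j ≠ q)
    (fun x => by simp [Finset.mem_erase])]
  have hterm : ∀ j : {j : Fin g // j ≠ q},
      (if (((Equiv.funSplitAt q (Col g k)).symm (c, ρ)) (j : Fin g)).1 = h then 1 else 0)
      = (if (ρ j).1 = h then (1 : ℕ) else 0) := by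
    intro j
    rw [psiOf_at_ne g k q ρ c j j.2, Subtype.coe_eta]
  rw [Finset.sum_congr rfl fun j _ => hterm j, ← Finset.card_filter]
  rw [show ((Finset.univ.filter fun j : {j : Fin g // j ≠ q} => (ρ j).1 = h)).card
    = urho g k q ρ h from rfl]
  have heq : (if c.1 = h then (1:ℕ) else 0) = (if h = c.1 then 1 else 0) := by
    by_cases hch : c.1 = h
    · simp [hch]
    · simp [hch, Ne.symm hch]
  rw [heq, add_comm]

lemma cofM_congr (ψ ψ' : Fin g → Col g k) (i : Fin g)
    (hagree : ∀ q', q' ≠ q → ψ q' = ψ' q') : cofM g k ψ i q = cofM g k ψ' i q := by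
  rw [cofM, cofM]
  congr 1
  funext p q'
  rw [Matrix.updateCol_apply, Matrix.updateCol_apply]
  split_ifs with h
  · rfl
  · show (MvPolynomial.X (p, ψ q') : MX g k) = MvPolynomial.X (p, ψ' q')
    rw [hagree q' h]

lemma card_block (h : Fin g) :
    (Finset.univ.filter fun c : Col g k => c.1 = h).card = k := by
  have himg : Finset.univ.filter (fun c : Col g k => c.1 = h)
      = Finset.image (fun ν : Fin k => (h, ν)) Finset.univ := by
    ext c
    simp only [Finset.mem_filter, Finset.mem_univ, true_and, Finset.mem_image]
    constructor
    · intro hc; exact ⟨c.2, by rw [← hc]⟩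
    · rintro ⟨ν, rfl⟩; rfl
  rw [himg, Finset.card_image_of_injective _ (fun a b hab => (Prod.mk.injEq _ _ _ _).mp hab |>.2),
    Finset.card_univ, Fintype.card_fin]

lemma card_used (hρ : Function.Injective ρ) (h : Fin g) :
    ((Finset.image ρ Finset.univ).filter fun c : Col g k => c.1 = h).card = urho g k q ρ h := by
  have himg : (Finset.image ρ Finset.univ).filter (fun c : Col g k => c.1 = h)
      = Finset.image ρ (Finset.univ.filter fun j => (ρ j).1 = h) := by
    ext c
    simp only [Finset.mem_filter, Finset.mem_image, Finset.mem_univ, true_and]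
    constructor
    · rintro ⟨⟨j, rfl⟩, hc⟩; exact ⟨j, hc, rfl⟩
    · rintro ⟨j, hc, rfl⟩; exact ⟨⟨j, rfl⟩, hc⟩
  rw [himg, Finset.card_image_of_injective _ hρ, urho]

lemma card_unused (hρ : Function.Injective ρ) (h : Fin g) :
    (((Finset.univ.filter fun c : Col g k => c.1 = h)).filter
      (fun c => c ∉ Finset.image ρ Finset.univ)).card = k - urho g k q ρ h := by
  have hsplit : ((Finset.univ.filter fun c : Col g k => c.1 = h).filter
        (fun c => c ∈ Finset.image ρ Finset.univ)).card
      + ((Finset.univ.filter fun c : Col g k => c.1 = h).filter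
        (fun c => c ∉ Finset.image ρ Finset.univ)).card
      = (Finset.univ.filter fun c : Col g k => c.1 = h).card :=
    Finset.card_filter_add_card_filter_not _
  have hcomm : (Finset.univ.filter fun c : Col g k => c.1 = h).filter
      (fun c => c ∈ Finset.image ρ Finset.univ)
      = (Finset.image ρ Finset.univ).filter (fun c : Col g k => c.1 = h) := by
    ext c
    simp only [Finset.mem_filter, Finset.mem_univ, true_and]
    exact and_comm
  rw [hcomm, card_used g k q ρ hρ h, card_block g k h] at hsplit
  omega

lemma sum_urho : ∑ h, urho g k q ρ h = g - 1 := by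
  have h1 := counting (Finset.univ : Finset {j : Fin g // j ≠ q}) (fun j => (ρ j).1)
  rw [Finset.card_univ] at h1
  have hcard : Fintype.card {j : Fin g // j ≠ q} = g - 1 := by
    have : Fintype.card {j : Fin g // j ≠ q} = Fintype.card {j : Fin g // ¬ (j = q)} := rfl
    rw [this, Fintype.card_subtype_compl, Fintype.card_fin, Fintype.card_subtype_eq]
  simp only [urho]
  rw [h1, hcard]

lemma urho_le (hρ : Function.Injective ρ) (h : Fin g) : urho g k q ρ h ≤ k := by
  rw [← card_used g k q ρ hρ h]
  calc ((Finset.image ρ Finset.univ).filter fun c : Col g k => c.1 = h).card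
      ≤ (Finset.univ.filter fun c : Col g k => c.1 = h).card :=
        Finset.card_le_card fun c hc =>
          Finset.mem_filter.mpr ⟨Finset.mem_univ c, (Finset.mem_filter.mp hc).2⟩
    _ = k := card_block g k h

lemma group_sum (hρ : Function.Injective ρ) (f : Fin g → ℂ) :
    ∑ c : Col g k, (if c ∉ Finset.image ρ Finset.univ then f c.1 else 0)
      = ∑ h : Fin g, ((k - urho g k q ρ h : ℕ) : ℂ) * f h := by
  rw [← Finset.sum_fiberwise Finset.univ (fun c : Col g k => c.1)
    (fun c => if c ∉ Finset.image ρ Finset.univ then f c.1 else 0)]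
  refine Finset.sum_congr rfl fun h _ => ?_
  rw [← Finset.sum_filter]
  rw [Finset.sum_congr rfl (fun c hc => show f c.1 = f h by
    rw [(Finset.mem_filter.mp (Finset.filter_subset _ _ hc)).2])]
  rw [Finset.sum_const, card_unused g k q ρ hρ h, nsmul_eq_mul]

end Regroup

lemma Deltam_zero (g k : ℕ) (i j : Fin g) : Deltam g k i j 0 = 0 := by
  simp [Deltam]

set_option maxHeartbeats 2000000 in
lemma inner_zero (g k : ℕ) (hg : 2 ≤ g) (hk1 : 1 ≤ k) (i j q : Fin g) :
    ∑ ψ : Fin g → Col g k, (if Function.Injective ψ then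
      ccoef g ((k : ℂ)/2) (mtype g k ψ) • (2 * (cofM g k ψ i q * cofM g k ψ j q)) else 0) = 0 := by
  classical
  rw [← Equiv.sum_comp (Equiv.funSplitAt q (Col g k)).symm
    (fun ψ => if Function.Injective ψ then
      ccoef g ((k : ℂ)/2) (mtype g k ψ) • (2 * (cofM g k ψ i q * cofM g k ψ j q)) else 0)]
  rw [Fintype.sum_prod_type, Finset.sum_comm]
  refine Finset.sum_eq_zero fun ρ _ => ?_
  by_cases hρ : Function.Injective ρ
  · have hg0 : 0 < g := by omega
    have hk0 : 0 < k := hk1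
    set c0 : Col g k := (⟨0, hg0⟩, ⟨0, hk0⟩) with hc0
    set K : MX g k := 2 * (cofM g k ((Equiv.funSplitAt q (Col g k)).symm (c0, ρ)) i q *
      cofM g k ((Equiv.funSplitAt q (Col g k)).symm (c0, ρ)) j q) with hK
    have hcof : ∀ c : Col g k, 2 * (cofM g k ((Equiv.funSplitAt q (Col g k)).symm (c, ρ)) i q *
        cofM g k ((Equiv.funSplitAt q (Col g k)).symm (c, ρ)) j q) = K := by
      intro c
      rw [hK]
      have hagree : ∀ q', q' ≠ q → (Equiv.funSplitAt q (Col g k)).symm (c, ρ) q'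
          = (Equiv.funSplitAt q (Col g k)).symm (c0, ρ) q' := by
        intro q' hq'
        rw [psiOf_at_ne g k q ρ c q' hq', psiOf_at_ne g k q ρ c0 q' hq']
      rw [cofM_congr g k q _ _ i hagree, cofM_congr g k q _ _ j hagree]
    have hterm : ∀ c : Col g k,
        (if Function.Injective ((Equiv.funSplitAt q (Col g k)).symm (c, ρ)) then
          ccoef g ((k : ℂ)/2) (mtype g k ((Equiv.funSplitAt q (Col g k)).symm (c, ρ))) •
            (2 * (cofM g k ((Equiv.funSplitAt q (Col g k)).symm (c, ρ)) i q *
              cofM g k ((Equiv.funSplitAt q (Col g k)).symm (c, ρ)) j q)) else 0)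
        = (if c ∉ Finset.image ρ Finset.univ then
            ccoef g ((k : ℂ)/2) (urho g k q ρ + Pi.single c.1 1) else 0) • K := by
      intro c
      by_cases hc : c ∉ Finset.image ρ Finset.univ
      · rw [if_pos ((inj_iff g k q ρ c hρ).mpr hc), if_pos hc, mtype_psiOf, hcof]
      · rw [if_neg (fun hinj => hc ((inj_iff g k q ρ c hρ).mp hinj)), if_neg hc, zero_smul]
    rw [Finset.sum_congr rfl fun c _ => hterm c, ← Finset.sum_smul]
    rw [show (∑ c : Col g k, if c ∉ Finset.image ρ Finset.univ then
        ccoef g ((k : ℂ)/2) (urho g k q ρ + Pi.single c.1 1) else 0)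
      = ∑ h : Fin g, ((k - urho g k q ρ h : ℕ) : ℂ) *
          ccoef g ((k : ℂ)/2) (urho g k q ρ + Pi.single h 1) from
      group_sum g k q ρ hρ (fun h => ccoef g ((k : ℂ)/2) (urho g k q ρ + Pi.single h 1))]
    rw [key_sum g k hg (urho g k q ρ) (sum_urho g k q ρ) (urho_le g k q ρ hρ), zero_smul]
  · refine Finset.sum_eq_zero fun c _ => ?_
    rw [if_neg (fun hinj => hρ (inj_restrict g k q ρ c hinj))]

lemma grand (g k : ℕ) (hg : 2 ≤ g) (hk1 : 1 ≤ k) (i j : Fin g) :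
    ∑ ψ : Fin g → Col g k, ccoef g ((k : ℂ)/2) (mtype g k ψ) •
      Deltam g k i j ((Nmat g k ψ).det ^ 2) = 0 := by
  classical
  have hre : ∀ ψ : Fin g → Col g k, ccoef g ((k : ℂ)/2) (mtype g k ψ) •
      Deltam g k i j ((Nmat g k ψ).det ^ 2)
      = ∑ q : Fin g, (if Function.Injective ψ then
          ccoef g ((k : ℂ)/2) (mtype g k ψ) •
            (2 * (cofM g k ψ i q * cofM g k ψ j q)) else 0) := by
    intro ψ
    by_cases hinj : Function.Injective ψ
    · rw [Deltam_det_sq g k ψ hinj i j, Finset.smul_sum]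
      exact Finset.sum_congr rfl fun q _ => by rw [if_pos hinj]
    · rw [det_Nmat_eq_zero g k ψ hinj, zero_pow (by norm_num : (2:ℕ) ≠ 0),
        Deltam_zero, smul_zero]
      symm
      exact Finset.sum_eq_zero fun q _ => if_neg hinj
  rw [Finset.sum_congr rfl fun ψ _ => hre ψ, Finset.sum_comm]
  exact Finset.sum_eq_zero fun q _ => inner_zero g k hg hk1 i j q

end S17

/-- For `g ≥ 2` and a positive integer or half-integer `a` with `2a ≥ g`
(so `k := 2a ≥ g` is a positive integer), the polynomial
`Q_{g,a} = (1/C(1))·Σ_n c(n)·R(n)` is pluriharmonic with respect to `g×k` blocks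
`X₁,…,X_g`: `Δ_{ij}(Q̃_{g,a}) = 0` for all `i, j`. -/



theorem statement_17 (g k : ℕ) (hg : 2 ≤ g) (hk1 : 1 ≤ k) (hk : g ≤ k) :
    ∀ i j : Fin g, Deltam g k i j (toXm g k (Qpoly g ((k : ℂ) / 2))) = 0 := by
  intro i j
  rw [S17.toXm_Qpoly', S17.Deltam_smul, S17.Deltam_sum,
    Finset.sum_congr rfl fun ψ _ => S17.Deltam_smul g k i j _ _,
    S17.grand g k hg hk1 i j, smul_zero]

end
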